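/- Let 2 ≤ k ≤ n, let α ∈ I(k,n), and let f_1, …, f_n ∈ C²(ℝ). Define F : ℝⁿ → ℝ by F(x) = ∏_{i=1}^n f_i(x_i) and g_i := f_i'' f_i − (f_i')² for i = 1,…,n. Then, at every x ∈ ℝⁿ, M_α^α(D²F) = ( ∏_{i ∉ α} f_i(x_i) )^k ( ∏_{i ∈ α} f_i(x_i) )^{k−2} [ ∏_{i ∈ α} g_i(x_i) + ∑_{j ∈ α} ( ∏_{i ∈ α, i ≠ j} g_i(x_i) ) (f_j'(x_j))² ]. -/

import Mathlib

open MeasureTheory Filter Topology Finset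

noncomputable section

/-- Euclidean `n`-space. -/
abbrev Eu (n : ℕ) : Type := EuclideanSpace ℝ (Fin n)

/-- The partial derivative `∂ᵢ u`. -/
noncomputable def pd {n : ℕ} (i : Fin n) (u : Eu n → ℝ) : Eu n → ℝ :=
  fun x => fderiv ℝ u x (EuclideanSpace.single i 1)

/-- The second partial derivative `∂ᵢ∂ⱼ u`. -/
noncomputable def pd2 {n : ℕ} (i j : Fin n) (u : Eu n → ℝ) : Eu n → ℝ :=
  pd i (pd j u)

/-- The Hessian matrix `D²u` of `u`. -/
noncomputable def hess {n : ℕ} (u : Eu n → ℝ) (x : Eu n) : Matrix (Fin n) (Fin n) ℝ :=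
  Matrix.of fun i j => pd2 i j u x

/-- The minor `M_r^c(A)`: the determinant of the submatrix of `A` with rows `r` and
columns `c` (both taken in increasing order); `0` if the cardinalities differ. -/
noncomputable def minor {N : ℕ} (A : Matrix (Fin N) (Fin N) ℝ) (r c : Finset (Fin N)) : ℝ :=
  if h : c.card = r.card then
    (Matrix.of fun i j : Fin r.card =>
      A ((r.orderIsoOfFin rfl i : Fin N)) ((c.orderIsoOfFin h j : Fin N))).det
  else 0

/-- The `k`-Hessian `F_k[u] = ∑_{α ∈ I(k,n)} M_α^α(D²u)`. -/
noncomputable def fkH {n : ℕ} (k : ℕ) (u : Eu n → ℝ) (x : Eu n) : ℝ :=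
  ∑ s ∈ Finset.univ.filter (fun s : Finset (Fin n) => s.card = k), minor (hess u x) s s


/-! At `x`, with `dᵢ = fᵢ(xᵢ)`, `aᵢ = fᵢ'(xᵢ)`, `bᵢ = fᵢ''(xᵢ)`, the Hessian of `F` has diagonal
entries `bᵢ ∏_{l ≠ i} d_l` and off-diagonal entries `aᵢ aⱼ ∏_{l ≠ i, j} d_l`, and its principal
`α`-submatrix is `∏_{l ∉ α} d_l` times the matrix of the same shape built from `α` alone.
Multiplying such a matrix on the right by `diag d` gives `diag(∏_{l ≠ i} d_l) · (diag g + a aᵀ)`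
with `gᵢ = bᵢ dᵢ - aᵢ²`, and the matrix determinant lemma evaluates `det (diag g + a aᵀ)` when
every `gᵢ` is invertible. Cancelling `∏ dᵢ` needs it to be invertible as well, so the identity is
first proved for indeterminates `d, a, b` in the fraction field of `ℤ[d, a, b]` and then
specialised to an arbitrary commutative ring. -/

lemma Finset.prod_compl_map {ι κ M : Type*} [Fintype ι] [Fintype κ] [DecidableEq ι] [DecidableEq κ]
    [CommMonoid M] (e : κ ↪ ι) (s : Finset κ) (d : ι → M) :
    ∏ l ∈ (s.map e)ᶜ, d l = (∏ l ∈ (univ.map e)ᶜ, d l) * ∏ j ∈ sᶜ, d (e j) := by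
  rw [← Finset.prod_map sᶜ e d, ← Finset.prod_union]
  · congr 1
    ext l
    by_cases hl : l ∈ Set.range e
    · obtain ⟨j, rfl⟩ := hl
      simp
    · simp_all
  · rw [Finset.disjoint_left]
    simp only [mem_compl, mem_map, mem_univ, true_and, not_exists]
    exact fun l hl j hj => hl j hj.2

lemma Finset.prod_prod_erase_eq_pow {ι M : Type*} [Fintype ι] [DecidableEq ι] [CommMonoid M]
    (d : ι → M) :
    ∏ i, ∏ l ∈ univ.erase i, d l = (∏ i, d i) ^ (Fintype.card ι - 1) := by
  rw [Finset.prod_comm' (t' := univ) (s' := fun l => univ.erase l) (by simp [ne_comm]),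
    ← Finset.prod_pow]
  refine Finset.prod_congr rfl fun l _ => ?_
  rw [Finset.prod_const, Finset.card_erase_of_mem (mem_univ l), Finset.card_univ]

lemma Matrix.det_diagonal_add_vecMulVec {ι K : Type*} [Fintype ι] [DecidableEq ι] [Field K]
    {g : ι → K} (hg : ∀ i, g i ≠ 0) (u v : ι → K) :
    (Matrix.diagonal g + Matrix.vecMulVec u v).det =
      ∏ i, g i + ∑ j, (∏ i ∈ univ.erase j, g i) * (u j * v j) := by
  have hfactor : Matrix.diagonal g + Matrix.vecMulVec u v =
      Matrix.diagonal g * (1 + Matrix.vecMulVec (fun i => u i / g i) v) := by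
    ext i j
    simp only [Matrix.add_apply, Matrix.diagonal_mul, Matrix.diagonal_apply, Matrix.one_apply,
      Matrix.vecMulVec_apply]
    rw [mul_add, ← mul_assoc, mul_div_cancel₀ _ (hg i)]
    split_ifs <;> simp
  rw [hfactor, Matrix.det_mul, Matrix.det_diagonal, Matrix.vecMulVec_eq Unit,
    Matrix.det_one_add_replicateCol_mul_replicateRow, mul_add, mul_one, dotProduct, Finset.mul_sum]
  congr 1
  refine Finset.sum_congr rfl fun j _ => ?_
  rw [← Finset.mul_prod_erase _ _ (mem_univ j)]
  field_simp [hg j]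

section ProdHessMatrix

variable {ι R : Type*} [Fintype ι] [DecidableEq ι] [CommRing R]

def prodHessMatrix (d a b : ι → R) : Matrix ι ι R :=
  Matrix.of fun i j => if i = j then b i * ∏ l ∈ univ.erase i, d l
    else a i * a j * ∏ l ∈ (univ.erase i).erase j, d l

lemma prodHessMatrix_map {S : Type*} [CommRing S] (ψ : R →+* S) (d a b : ι → R) :
    (prodHessMatrix d a b).map ψ = prodHessMatrix (ψ ∘ d) (ψ ∘ a) (ψ ∘ b) := by
  ext i j
  simp only [prodHessMatrix, Matrix.map_apply, Matrix.of_apply, apply_ite ψ, map_mul, map_prod,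
    Function.comp_apply]

lemma prodHessMatrix_submatrix {κ : Type*} [Fintype κ] [DecidableEq κ] (e : κ ↪ ι)
    (d a b : ι → R) :
    (prodHessMatrix d a b).submatrix e e =
      (∏ l ∈ (univ.map e)ᶜ, d l) • prodHessMatrix (d ∘ e) (a ∘ e) (b ∘ e) := by
  ext i j
  simp only [prodHessMatrix, Matrix.submatrix_apply, Matrix.smul_apply, Matrix.of_apply,
    e.injective.eq_iff, smul_eq_mul, Function.comp_apply]
  split_ifs
  · rw [← compl_singleton, ← compl_singleton, ← map_singleton, Finset.prod_compl_map]
    ring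
  · rw [← compl_singleton, ← compl_insert, ← compl_singleton, ← compl_insert, ← map_singleton,
      ← map_insert, Finset.prod_compl_map]
    ring

lemma prodHessMatrix_mul_diagonal (d a b : ι → R) :
    prodHessMatrix d a b * Matrix.diagonal d =
      Matrix.diagonal (fun i => ∏ l ∈ univ.erase i, d l) *
        (Matrix.diagonal (fun i => b i * d i - a i ^ 2) + Matrix.vecMulVec a a) := by
  ext i j
  rw [Matrix.mul_diagonal, Matrix.diagonal_mul]
  rcases eq_or_ne i j with rfl | hij
  · simp [prodHessMatrix, Matrix.vecMulVec_apply]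
    ring
  · simp only [prodHessMatrix, Matrix.of_apply, Matrix.add_apply, Matrix.diagonal_apply_ne _ hij,
      Matrix.vecMulVec_apply, if_neg hij, zero_add]
    rw [← Finset.prod_erase_mul _ _ (mem_erase.2 ⟨hij.symm, mem_univ j⟩)]
    ring

lemma det_prodHessMatrix_mul_prod (d a b : ι → R) :
    (prodHessMatrix d a b).det * ∏ i, d i = (∏ i, d i) ^ (Fintype.card ι - 1) *
        (Matrix.diagonal (fun i => b i * d i - a i ^ 2) + Matrix.vecMulVec a a).det := by
  have h := congrArg Matrix.det (prodHessMatrix_mul_diagonal d a b)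
  rwa [Matrix.det_mul, Matrix.det_mul, Matrix.det_diagonal, Matrix.det_diagonal,
    Finset.prod_prod_erase_eq_pow] at h

lemma det_prodHessMatrix_of_ne_zero {K : Type*} [Field K] (hι : 2 ≤ Fintype.card ι)
    {d a b : ι → K} (hd : ∀ i, d i ≠ 0) (hg : ∀ i, b i * d i - a i ^ 2 ≠ 0) :
    (prodHessMatrix d a b).det = (∏ i, d i) ^ (Fintype.card ι - 2) *
      (∏ i, (b i * d i - a i ^ 2) +
        ∑ j, (∏ i ∈ univ.erase j, (b i * d i - a i ^ 2)) * a j ^ 2) := by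
  have hprod : ∏ i, d i ≠ 0 := Finset.prod_ne_zero_iff.2 fun i _ => hd i
  refine mul_right_cancel₀ hprod ?_
  rw [det_prodHessMatrix_mul_prod, Matrix.det_diagonal_add_vecMulVec hg]
  obtain ⟨m, hm⟩ := Nat.exists_eq_add_of_le hι
  simp only [hm, Nat.add_sub_cancel_left, show 2 + m - 1 = m + 1 by omega, pow_succ, ← sq]
  ring

theorem det_prodHessMatrix (hι : 2 ≤ Fintype.card ι) (d a b : ι → R) :
    (prodHessMatrix d a b).det = (∏ i, d i) ^ (Fintype.card ι - 2) *
      (∏ i, (b i * d i - a i ^ 2) +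
        ∑ j, (∏ i ∈ univ.erase j, (b i * d i - a i ^ 2)) * a j ^ 2) := by
  let X := MvPolynomial (ι × Fin 3) ℤ
  let D : ι → X := fun i => MvPolynomial.X (i, 0)
  let A : ι → X := fun i => MvPolynomial.X (i, 1)
  let B : ι → X := fun i => MvPolynomial.X (i, 2)
  have hgeneric : (prodHessMatrix D A B).det = (∏ i, D i) ^ (Fintype.card ι - 2) *
      (∏ i, (B i * D i - A i ^ 2) +
        ∑ j, (∏ i ∈ univ.erase j, (B i * D i - A i ^ 2)) * A j ^ 2) := by
    let φ := algebraMap X (FractionRing X)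
    have hφ : Function.Injective φ := IsFractionRing.injective X (FractionRing X)
    apply hφ
    have hD : ∀ i, (φ ∘ D) i ≠ 0 := fun i =>
      (map_ne_zero_iff φ hφ).2 (MvPolynomial.X_ne_zero _)
    have hg : ∀ i, (φ ∘ B) i * (φ ∘ D) i - (φ ∘ A) i ^ 2 ≠ 0 := by
      intro i h
      simp only [Function.comp_apply, ← map_mul, ← map_pow, ← map_sub, map_eq_zero_iff φ hφ] at h
      -- `b d - a²` is `1` at `a = 0`, `b = d = 1`
      have := congrArg (MvPolynomial.eval fun v : ι × Fin 3 => if v.2 = 1 then (0 : ℤ) else 1) h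
      simp [A, B, D] at this
    rw [RingHom.map_det, RingHom.mapMatrix_apply, prodHessMatrix_map,
      det_prodHessMatrix_of_ne_zero hι hD hg]
    simp only [map_mul, map_pow, map_prod, map_add, map_sum, map_sub, Function.comp_apply]
  let ψ := MvPolynomial.eval₂Hom (Int.castRingHom R) fun v : ι × Fin 3 => ![d, a, b] v.2 v.1
  have h := congrArg ψ hgeneric
  simp only [RingHom.map_det, RingHom.mapMatrix_apply, prodHessMatrix_map, map_mul, map_pow,
    map_prod, map_add, map_sum, map_sub] at h
  simpa [ψ, D, A, B, Function.comp_def] using h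

end ProdHessMatrix

lemma minor_self_eq_det_submatrix {N : ℕ} (A : Matrix (Fin N) (Fin N) ℝ) (s : Finset (Fin N)) :
    minor A s s =
      (A.submatrix (s.orderEmbOfFin rfl).toEmbedding (s.orderEmbOfFin rfl).toEmbedding).det := by
  rw [minor, dif_pos rfl]
  rfl

section Derivatives

variable {n : ℕ} {f : Fin n → ℝ → ℝ}

lemma pd_prod (hf : ∀ i, Differentiable ℝ (f i)) (i : Fin n) :
    pd i (fun y : Eu n => ∏ l, f l (y l)) =
      fun x => deriv (f i) (x i) * ∏ l ∈ univ.erase i, f l (x l) := by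
  funext x
  have hF : HasFDerivAt (fun y : Eu n => ∏ l, f l (y l))
      (∑ l, (∏ m ∈ univ.erase l, f m (x m)) •
        (deriv (f l) (x l) • (EuclideanSpace.proj l : Eu n →L[ℝ] ℝ))) x :=
    HasFDerivAt.finsetProd fun l _ =>
      (hf l (x l)).hasDerivAt.comp_hasFDerivAt x
        (EuclideanSpace.proj l : Eu n →L[ℝ] ℝ).hasFDerivAt
  rw [pd, hF.fderiv]
  simp [mul_comm]

lemma pd_prod_eq_prod_update (hf : ∀ i, Differentiable ℝ (f i)) (j : Fin n) :
    pd j (fun y : Eu n => ∏ l, f l (y l)) =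
      fun y => ∏ l, Function.update f j (deriv (f j)) l (y l) := by
  rw [pd_prod hf j]
  funext y
  rw [← Finset.mul_prod_erase univ _ (mem_univ j), Function.update_self]
  congr 1
  exact Finset.prod_congr rfl fun l hl => by rw [Function.update_of_ne (ne_of_mem_erase hl)]

lemma hess_prod (hf : ∀ i, Differentiable ℝ (f i)) (hf' : ∀ i, Differentiable ℝ (deriv (f i)))
    (x : Eu n) :
    hess (fun y : Eu n => ∏ l, f l (y l)) x =
      prodHessMatrix (fun l => f l (x l)) (fun l => deriv (f l) (x l))
        (fun l => deriv (deriv (f l)) (x l)) := by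
  ext i j
  have hupdate : ∀ l, Differentiable ℝ (Function.update f j (deriv (f j)) l) := by
    intro l
    rcases eq_or_ne l j with rfl | hl
    · simpa using hf' l
    · simpa [Function.update_of_ne hl] using hf l
  rw [hess, Matrix.of_apply, pd2, pd_prod_eq_prod_update hf j, pd_prod hupdate i, prodHessMatrix,
    Matrix.of_apply]
  dsimp only
  rcases eq_or_ne i j with rfl | hij
  · simp only [Function.update_self, if_true]
    congr 1
    exact Finset.prod_congr rfl fun l hl => by rw [Function.update_of_ne (ne_of_mem_erase hl)]
  · rw [Function.update_of_ne hij, if_neg hij,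
      ← Finset.mul_prod_erase _ _ (mem_erase.2 ⟨hij.symm, mem_univ j⟩), Function.update_self]
    simp only [mul_assoc]
    congr 2
    exact Finset.prod_congr rfl fun l hl => by rw [Function.update_of_ne (ne_of_mem_erase hl)]

end Derivatives

theorem stmt12_general (n k : ℕ) (hk : 2 ≤ k)
    (f : Fin n → ℝ → ℝ) (hf : ∀ i, ContDiff ℝ 2 (f i))
    (α : Finset (Fin n)) (hα : α.card = k) :
    ∀ x : Eu n,
      minor (hess (fun y : Eu n => ∏ i, f i (y i)) x) α α =
        (∏ i ∈ αᶜ, f i (x i)) ^ k * (∏ i ∈ α, f i (x i)) ^ (k - 2) *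
          ((∏ i ∈ α, (deriv (deriv (f i)) (x i) * f i (x i) - (deriv (f i) (x i)) ^ 2))
            + ∑ j ∈ α,
                (∏ i ∈ α.erase j,
                  (deriv (deriv (f i)) (x i) * f i (x i) - (deriv (f i) (x i)) ^ 2))
                  * (deriv (f j) (x j)) ^ 2) := by
  intro x
  have hf1 : ∀ i, Differentiable ℝ (f i) := fun i => (hf i).differentiable (by norm_num)
  have hf2 : ∀ i, Differentiable ℝ (deriv (f i)) := fun i => (hf i).differentiable_deriv_two
  let e := (α.orderEmbOfFin rfl).toEmbedding
  have hrange : univ.map e = α := by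
    ext l
    simp [e]
  have hprod (h : Fin n → ℝ) : ∏ l ∈ α, h l = ∏ i, h (e i) := by
    rw [← Finset.prod_map, hrange]
  have hprod_erase (h : Fin n → ℝ) (j) :
      ∏ l ∈ α.erase (e j), h l = ∏ i ∈ univ.erase j, h (e i) := by
    rw [← Finset.prod_map, Finset.map_erase, hrange]
  have hsum (h : Fin n → ℝ) : ∑ l ∈ α, h l = ∑ i, h (e i) := by
    rw [← Finset.sum_map, hrange]
  rw [minor_self_eq_det_submatrix, hess_prod hf1 hf2, prodHessMatrix_submatrix, Matrix.det_smul,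
    det_prodHessMatrix (by simpa [hα] using hk), Fintype.card_fin, hrange, ← hα, hsum]
  simp only [hprod, hprod_erase, Function.comp_apply]
  ring

theorem stmt12 (n k : ℕ) (hk : 2 ≤ k) (hkn : k ≤ n)
    (f : Fin n → ℝ → ℝ) (hf : ∀ i, ContDiff ℝ 2 (f i))
    (α : Finset (Fin n)) (hα : α.card = k) :
    ∀ x : Eu n,
      minor (hess (fun y : Eu n => ∏ i, f i (y i)) x) α α =
        (∏ i ∈ αᶜ, f i (x i)) ^ k * (∏ i ∈ α, f i (x i)) ^ (k - 2) *
          ((∏ i ∈ α, (deriv (deriv (f i)) (x i) * f i (x i) - (deriv (f i) (x i)) ^ 2))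
            + ∑ j ∈ α,
                (∏ i ∈ α.erase j,
                  (deriv (deriv (f i)) (x i) * f i (x i) - (deriv (f i) (x i)) ^ 2))
                  * (deriv (f j) (x j)) ^ 2) :=
  stmt12_general n k hk f hf α hα

end
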